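/- arXiv:2501.14106 — 3 statements merged into one kernel-verified Lean document; each statement's English description precedes it below -/
import Mathlib

section
/- Let (A, ⊗, 1) be an abelian Q-linear category with an exact symmetric monoidal structure, and suppose every object of A is dualizable (A is rigid). If the endomorphism ring End(1) of the unit object is an integral domain, then End(1) is a field. -/
/-!
By Schur's lemma it is enough to show that `𝟙_ C` is a simple object. Let `ι : K ⟶ 𝟙_ C` be a
monomorphism with cokernel `π : 𝟙_ C ⟶ Q`. In a rigid category tensoring is exact on both
sides, and the epimorphism `π ▷ K` composed with the monomorphism `Q ◁ ι` vanishes, so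
`Q ⊗ K = 0` and `ι ▷ K : K ⊗ K ⟶ 𝟙_ C ⊗ K` is an isomorphism. Closing the duality loop of `K`
through its inverse gives `r : 𝟙_ C ⟶ K` with `r ≫ ι = dim K`, while `ι ≫ dim K = ι` because
`ι ▷ K` and `K ◁ ι` agree up to unitors when `ι` is mono. Hence `ι ≫ r = 𝟙 K`, and `r ≫ ι` is an
idempotent of the domain `End (𝟙_ C)`: either it is `0` and `ι = 0`, or it is `1` and `ι` is an
isomorphism.
-/

open CategoryTheory CategoryTheory.Limits CategoryTheory.MonoidalCategory

section Monoidal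

variable {C : Type*} [Category C] [MonoidalCategory C]

lemma unit_end_comm (f g : 𝟙_ C ⟶ 𝟙_ C) : f ≫ g = g ≫ f := by
  have h := whisker_exchange f g
  simp only [id_whiskerLeft, whiskerRight_id, unitors_equal, unitors_inv_equal, Category.assoc,
    Iso.inv_hom_id_assoc, cancel_epi] at h
  simpa only [← Category.assoc, cancel_mono] using h.symm

lemma whiskerRight_leftUnitor_comp_eq {X Y : C} (f : X ⟶ 𝟙_ C) (g : Y ⟶ 𝟙_ C) :
    f ▷ Y ≫ (λ_ Y).hom ≫ g = X ◁ g ≫ (ρ_ X).hom ≫ f := by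
  rw [← leftUnitor_naturality, ← whisker_exchange_assoc, ← rightUnitor_naturality, unitors_equal]

lemma comp_scalar_eq {X : C} (f : X ⟶ 𝟙_ C) (s : 𝟙_ C ⟶ 𝟙_ C) :
    f ≫ s = (λ_ X).inv ≫ s ▷ X ≫ (λ_ X).hom ≫ f := by
  simp [whiskerRight_leftUnitor_comp_eq, unitors_inv_equal]

lemma whiskerRight_leftUnitor_eq_of_mono {K : C} (ι : K ⟶ 𝟙_ C) [Mono ι] :
    ι ▷ K ≫ (λ_ K).hom = K ◁ ι ≫ (ρ_ K).hom :=
  (cancel_mono ι).1 (by simpa using whiskerRight_leftUnitor_comp_eq ι ι)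

lemma whiskerLeft_rightUnitor_eq_of_mono (X : C) {K : C} (ι : K ⟶ 𝟙_ C) [Mono ι] :
    (X ⊗ K) ◁ ι ≫ (ρ_ (X ⊗ K)).hom = (X ◁ ι ≫ (ρ_ X).hom) ▷ K := by
  simp only [tensor_whiskerLeft, rightUnitor_tensor_hom, Category.assoc, Iso.inv_hom_id_assoc,
    ← whiskerLeft_comp, ← whiskerRight_leftUnitor_eq_of_mono ι, comp_whiskerRight]
  simp

instance tensorLeft_isRightAdjoint (K : C) [HasRightDual K] : (tensorLeft K).IsRightAdjoint :=
  ⟨_, ⟨tensorLeftAdjunction K Kᘁ⟩⟩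

instance tensorRight_isLeftAdjoint (K : C) [HasRightDual K] : (tensorRight K).IsLeftAdjoint :=
  ⟨_, ⟨tensorRightAdjunction K Kᘁ⟩⟩

instance tensorRight_isRightAdjoint (K : C) [HasLeftDual K] : (tensorRight K).IsRightAdjoint :=
  ⟨_, ⟨tensorRightAdjunction ᘁK K⟩⟩

end Monoidal

section Braided

variable {C : Type*} [Category C] [MonoidalCategory C] [BraidedCategory C]

def categoricalDim (K : C) [HasRightDual K] : 𝟙_ C ⟶ 𝟙_ C :=
  η_ K Kᘁ ≫ (β_ K Kᘁ).hom ≫ ε_ K Kᘁ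

lemma comp_categoricalDim_of_mono {K : C} [HasRightDual K] (ι : K ⟶ 𝟙_ C) [Mono ι] :
    ι ≫ categoricalDim K = ι := by
  have hβ : (β_ K Kᘁ).hom ≫ Kᘁ ◁ ι ≫ (ρ_ (Kᘁ)).hom = ι ▷ Kᘁ ≫ (λ_ (Kᘁ)).hom := by
    rw [← BraidedCategory.braiding_naturality_left_assoc, braiding_tensorUnit_left]
    simp
  calc ι ≫ categoricalDim K
      = (λ_ K).inv ≫ η_ K Kᘁ ▷ K ≫ (β_ K Kᘁ).hom ▷ K ≫ ε_ K Kᘁ ▷ K ≫ (λ_ K).hom ≫ ι := by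
        simp [comp_scalar_eq ι, categoricalDim]
    _ = (λ_ K).inv ≫ η_ K Kᘁ ▷ K ≫ (ι ▷ Kᘁ) ▷ K ≫ (λ_ (Kᘁ)).hom ▷ K ≫ ε_ K Kᘁ := by
        rw [whiskerRight_leftUnitor_comp_eq, ← Category.assoc ((Kᘁ ⊗ K) ◁ ι),
          whiskerLeft_rightUnitor_eq_of_mono, ← comp_whiskerRight_assoc (β_ K Kᘁ).hom, hβ,
          comp_whiskerRight_assoc]
    _ = (λ_ K).inv ≫ η_ K Kᘁ ▷ K ≫ (α_ _ _ _).hom ≫ K ◁ ε_ K Kᘁ ≫ (ρ_ K).hom ≫ ι := by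
        rw [← whiskerRight_leftUnitor_comp_eq]
        simp
    _ = ι := by
        simp

lemma exists_comp_eq_categoricalDim {K : C} [HasRightDual K] (ι : K ⟶ 𝟙_ C)
    [IsSplitEpi (ι ▷ K)] : ∃ r : 𝟙_ C ⟶ K, r ≫ ι = categoricalDim K := by
  obtain ⟨c, hc⟩ : ∃ c : K ⟶ K ⊗ K, c ≫ ι ▷ K ≫ (λ_ K).hom = 𝟙 K :=
    ⟨(λ_ K).inv ≫ section_ (ι ▷ K), by simp⟩
  refine ⟨η_ K Kᘁ ≫ c ▷ Kᘁ ≫ (α_ K K Kᘁ).hom ≫ K ◁ ((β_ K Kᘁ).hom ≫ ε_ K Kᘁ) ≫ (ρ_ K).hom, ?_⟩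
  calc _ = η_ K Kᘁ ≫ (c ≫ ι ▷ K ≫ (λ_ K).hom) ▷ Kᘁ ≫ (β_ K Kᘁ).hom ≫ ε_ K Kᘁ := by
        simp only [Category.assoc, ← whiskerRight_leftUnitor_comp_eq]
        simp
    _ = categoricalDim K := by rw [hc, id_whiskerRight, Category.id_comp, categoricalDim]

lemma isSplitMono_of_isSplitEpi_whiskerRight {K : C} [HasRightDual K] (ι : K ⟶ 𝟙_ C) [Mono ι]
    [IsSplitEpi (ι ▷ K)] : IsSplitMono ι := by
  obtain ⟨r, hr⟩ := exists_comp_eq_categoricalDim ι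
  refine IsSplitMono.mk' ⟨r, (cancel_mono ι).1 ?_⟩
  rw [Category.assoc, hr, comp_categoricalDim_of_mono, Category.id_comp]

end Braided

section Abelian

variable {C : Type*} [Category C] [Abelian C] [MonoidalCategory C] [RigidCategory C]

lemma isZero_cokernel_tensor_of_mono {K : C} (ι : K ⟶ 𝟙_ C) [Mono ι] :
    IsZero (cokernel ι ⊗ K) := by
  have hzero : cokernel.π ι ▷ K ≫ cokernel ι ◁ ι = 0 := by
    rw [← whisker_exchange]
    simp [unitors_inv_equal]
  have : Epi (cokernel.π ι ▷ K) := (tensorRight K).map_epi _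
  have : Mono (cokernel ι ◁ ι) := (tensorLeft _).map_mono _
  exact IsZero.of_mono_eq_zero _ ((cancel_epi (cokernel.π ι ▷ K)).1 (by simpa using hzero))

lemma isIso_whiskerRight_of_mono {K : C} (ι : K ⟶ 𝟙_ C) [Mono ι] : IsIso (ι ▷ K) := by
  have : Mono (ι ▷ K) := (tensorRight K).map_mono ι
  have : Epi (ι ▷ K) := by
    apply Abelian.epi_of_cokernel_π_eq_zero
    exact ((isZero_cokernel_tensor_of_mono ι).of_iso
      (PreservesCokernel.iso (tensorRight K) ι).symm).eq_zero_of_tgt _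
  exact isIso_of_mono_of_epi _

variable [BraidedCategory C]

lemma simple_unit_of_isDomain [IsDomain (End (𝟙_ C))] : Simple (𝟙_ C) where
  mono_isIso_iff_nonzero {K} ι _ := by
    refine ⟨fun _ hι => ?_, fun hι => ?_⟩
    · apply one_ne_zero (α := End (𝟙_ C))
      simp [End.one_def, ← IsIso.inv_hom_id ι, hι]
    · have : IsIso (ι ▷ K) := isIso_whiskerRight_of_mono ι
      have : IsSplitMono ι := isSplitMono_of_isSplitEpi_whiskerRight ι
      let e : End (𝟙_ C) := retraction ι ≫ ι
      have he : IsIdempotentElem e := by simp [e, IsIdempotentElem, End.mul_def]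
      rcases IsIdempotentElem.iff_eq_zero_or_one.1 he with he0 | he1
      · refine absurd ?_ hι
        rw [← IsSplitMono.id_assoc ι ι]
        exact (congrArg (ι ≫ ·) he0).trans comp_zero
      · exact ⟨retraction ι, IsSplitMono.id ι, he1.trans End.one_def⟩

end Abelian

/-- In an abelian ℚ-linear rigid symmetric monoidal category with exact
tensor product, if `End (𝟙_ C)` is an integral domain then it is a field. -/
theorem stmt0 (C : Type*) [Category C] [Abelian C] [Linear ℚ C]
    [MonoidalCategory C] [SymmetricCategory C]
    [∀ X : C, PreservesFiniteLimits (tensorLeft X)]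
    [∀ X : C, PreservesFiniteColimits (tensorLeft X)]
    [RigidCategory C]
    (hdom : IsDomain (End (𝟙_ C))) :
    IsField (End (𝟙_ C)) := by
  have := simple_unit_of_isDomain (C := C)
  refine ⟨exists_pair_ne _, fun f g => unit_end_comm g f, fun {a} ha => ?_⟩
  have := isIso_of_hom_simple ha
  exact ⟨inv a, IsIso.inv_hom_id a⟩
end

section
/- Let (A, ⊗, 1) be an abelian category with an exact symmetric monoidal structure. Then the full subcategory A_rig of dualizable objects is closed under kernels and cokernels, hence is an abelian subcategory of A. -/
/-!
If `i : K ⟶ X` is mono, `p : Xᘁ ⟶ Q` is epi, and the unit and counit of `X ⊣ Xᘁ` factor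
through `K ⊗ Q` and `Q ⊗ K` compatibly with `i` and `p`, then the zigzag identities for
`(K, Q)` follow from those for `(X, Xᘁ)` after cancelling `p` and `i`. For `K = ker f` and
`Q = coker fᘁ` the factorizations exist because tensoring is exact and
`η_X ≫ f ▷ Xᘁ = η_Y ≫ Y ◁ fᘁ`; dually `coker f` is paired with `ker fᘁ`. In a braided
category a right dual is also a left dual.
-/

open CategoryTheory CategoryTheory.Limits CategoryTheory.MonoidalCategory

namespace CategoryTheory

variable {C : Type*} [Category C] [MonoidalCategory C]

namespace ExactPairing

abbrev ofMonoOfEpi {X X' K Q : C} [ExactPairing X X'] (i : K ⟶ X) [Mono i]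
    (p : X' ⟶ Q) [Epi p] (η : 𝟙_ C ⟶ K ⊗ Q) (ε : Q ⊗ K ⟶ 𝟙_ C)
    (hη : η ≫ i ▷ Q = η_ X X' ≫ X ◁ p) (hε : p ▷ K ≫ ε = X' ◁ i ≫ ε_ X X') :
    ExactPairing K Q where
  coevaluation' := η
  evaluation' := ε
  coevaluation_evaluation' := by
    have : Epi (p ▷ 𝟙_ C) := by rw [whiskerRight_id]; infer_instance
    rw [← cancel_epi (p ▷ 𝟙_ C), ← whisker_exchange_assoc,
      associator_inv_naturality_left_assoc, ← comp_whiskerRight, hε, comp_whiskerRight,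
      ← associator_inv_naturality_middle_assoc, ← whiskerLeft_comp_assoc, hη,
      whiskerLeft_comp_assoc, associator_inv_naturality_right_assoc, whisker_exchange,
      coevaluation_evaluation_assoc, whiskerRight_id]
    simp
  evaluation_coevaluation' := by
    have : Mono (i ▷ 𝟙_ C) := by rw [whiskerRight_id]; infer_instance
    rw [← cancel_mono (i ▷ 𝟙_ C), Category.assoc, Category.assoc, whisker_exchange,
      ← associator_naturality_left_assoc, ← comp_whiskerRight_assoc, hη,
      comp_whiskerRight_assoc, associator_naturality_middle_assoc, ← whiskerLeft_comp, hε,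
      whiskerLeft_comp, ← associator_naturality_right_assoc, ← whisker_exchange_assoc,
      evaluation_coevaluation, whiskerRight_id]
    simp

abbrev ofEpiOfMono {Y Y' Q K : C} [ExactPairing Y Y'] (q : Y ⟶ Q) [Epi q]
    (j : K ⟶ Y') [Mono j] (η : 𝟙_ C ⟶ Q ⊗ K) (ε : K ⊗ Q ⟶ 𝟙_ C)
    (hη : η ≫ Q ◁ j = η_ Y Y' ≫ q ▷ Y') (hε : K ◁ q ≫ ε = j ▷ Y ≫ ε_ Y Y') :
    ExactPairing Q K where
  coevaluation' := η
  evaluation' := ε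
  coevaluation_evaluation' := by
    have : Mono (𝟙_ C ◁ j) := by rw [id_whiskerLeft]; infer_instance
    rw [← cancel_mono (𝟙_ C ◁ j), Category.assoc, Category.assoc, ← whisker_exchange,
      ← associator_inv_naturality_right_assoc, ← whiskerLeft_comp_assoc, hη,
      whiskerLeft_comp_assoc, associator_inv_naturality_middle_assoc, ← comp_whiskerRight,
      hε, comp_whiskerRight, ← associator_inv_naturality_left_assoc, whisker_exchange_assoc,
      coevaluation_evaluation, id_whiskerLeft]
    simp
  evaluation_coevaluation' := by
    have : Epi (𝟙_ C ◁ q) := by rw [id_whiskerLeft]; infer_instance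
    rw [← cancel_epi (𝟙_ C ◁ q), whisker_exchange_assoc, associator_naturality_right_assoc,
      ← whiskerLeft_comp, hε, whiskerLeft_comp, ← associator_naturality_middle_assoc,
      ← comp_whiskerRight_assoc, hη, comp_whiskerRight_assoc,
      associator_naturality_left_assoc, ← whisker_exchange,
      evaluation_coevaluation_assoc, id_whiskerLeft]
    simp

end ExactPairing

section Abelian

variable [Abelian C] {X Y : C} (f : X ⟶ Y) [HasRightDual X] [HasRightDual Y]

noncomputable abbrev exactPairingKernel [∀ Z : C, PreservesFiniteLimits (tensorRight Z)]
    [∀ Z : C, PreservesFiniteColimits (tensorRight Z)] :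
    ExactPairing (kernel f) (cokernel (fᘁ)) :=
  have coev_comp : (η_ X Xᘁ ≫ X ◁ cokernel.π (fᘁ)) ≫ f ▷ cokernel (fᘁ) = 0 := by
    have := (tensorLeftAdjunction Y Yᘁ).isRightAdjoint
    rw [Category.assoc, whisker_exchange, ← coevaluation_comp_rightAdjointMate_assoc,
      ← whiskerLeft_comp, cokernel.condition,
      show Y ◁ (0 : Yᘁ ⟶ cokernel (fᘁ)) = 0 from (tensorLeft Y).map_zero _ _, comp_zero]
  have comp_ev : (fᘁ) ▷ kernel f ≫ Xᘁ ◁ kernel.ι f ≫ ε_ X Xᘁ = 0 := by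
    have := (tensorLeftAdjunction Y Yᘁ).isLeftAdjoint
    rw [← whisker_exchange_assoc, rightAdjointMate_comp_evaluation, ← whiskerLeft_comp_assoc,
      kernel.condition,
      show Yᘁ ◁ (0 : kernel f ⟶ Y) = 0 from (tensorLeft Yᘁ).map_zero _ _, zero_comp]
  ExactPairing.ofMonoOfEpi (kernel.ι f) (cokernel.π (fᘁ))
    (kernel.lift (f ▷ cokernel (fᘁ)) _ coev_comp ≫
      (PreservesKernel.iso (tensorRight (cokernel (fᘁ))) f).inv)
    ((PreservesCokernel.iso (tensorRight (kernel f)) (fᘁ)).hom ≫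
      cokernel.desc ((fᘁ) ▷ kernel f) _ comp_ev)
    (by
      rw [Category.assoc]
      exact (_ ≫= PreservesKernel.iso_inv_ι (tensorRight (cokernel (fᘁ))) f).trans
        (kernel.lift_ι _ _ _))
    (by
      rw [← Category.assoc]
      exact (PreservesCokernel.π_iso_hom (tensorRight (kernel f)) (fᘁ) =≫ _).trans
        (cokernel.π_desc _ _ _))

noncomputable abbrev exactPairingCokernel [∀ Z : C, PreservesFiniteLimits (tensorLeft Z)]
    [∀ Z : C, PreservesFiniteColimits (tensorLeft Z)] :
    ExactPairing (cokernel f) (kernel (fᘁ)) :=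
  have coev_comp : (η_ Y Yᘁ ≫ cokernel.π f ▷ Yᘁ) ≫ cokernel f ◁ (fᘁ) = 0 := by
    have := (tensorRightAdjunction X Xᘁ).isRightAdjoint
    rw [Category.assoc, ← whisker_exchange, coevaluation_comp_rightAdjointMate_assoc,
      ← comp_whiskerRight, cokernel.condition,
      show (0 : X ⟶ cokernel f) ▷ Xᘁ = 0 from (tensorRight Xᘁ).map_zero _ _, comp_zero]
  have comp_ev : kernel (fᘁ) ◁ f ≫ kernel.ι (fᘁ) ▷ Y ≫ ε_ Y Yᘁ = 0 := by
    have := (tensorRightAdjunction X Xᘁ).isLeftAdjoint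
    rw [whisker_exchange_assoc, ← rightAdjointMate_comp_evaluation, ← comp_whiskerRight_assoc,
      kernel.condition,
      show (0 : kernel (fᘁ) ⟶ Xᘁ) ▷ X = 0 from (tensorRight X).map_zero _ _, zero_comp]
  ExactPairing.ofEpiOfMono (cokernel.π f) (kernel.ι (fᘁ))
    (kernel.lift (cokernel f ◁ (fᘁ)) _ coev_comp ≫
      (PreservesKernel.iso (tensorLeft (cokernel f)) (fᘁ)).inv)
    ((PreservesCokernel.iso (tensorLeft (kernel (fᘁ))) f).hom ≫
      cokernel.desc (kernel (fᘁ) ◁ f) _ comp_ev)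
    (by
      rw [Category.assoc]
      exact (_ ≫= PreservesKernel.iso_inv_ι (tensorLeft (cokernel f)) (fᘁ)).trans
        (kernel.lift_ι _ _ _))
    (by
      rw [← Category.assoc]
      exact (PreservesCokernel.π_iso_hom (tensorLeft (kernel (fᘁ))) f =≫ _).trans
        (cokernel.π_desc _ _ _))

end Abelian

end CategoryTheory

/-- In an abelian ℚ-linear category with exact symmetric monoidal structure,
the full subcategory of dualizable objects is closed under kernels and cokernels. -/
theorem stmt1 (C : Type*) [Category C] [Abelian C] [Linear ℚ C]
    [MonoidalCategory C] [SymmetricCategory C]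
    [∀ X : C, PreservesFiniteLimits (tensorLeft X)]
    [∀ X : C, PreservesFiniteColimits (tensorLeft X)]
    {X Y : C} (f : X ⟶ Y) [HasRightDual X] [HasRightDual Y]
    [HasLeftDual X] [HasLeftDual Y] :
    (Nonempty (HasRightDual (kernel f)) ∧ Nonempty (HasLeftDual (kernel f))) ∧
    (Nonempty (HasRightDual (cokernel f)) ∧ Nonempty (HasLeftDual (cokernel f))) := by
  have (Z : C) : PreservesFiniteLimits (tensorRight Z) :=
    preservesFiniteLimits_of_natIso (BraidedCategory.tensorLeftIsoTensorRight Z)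
  have (Z : C) : PreservesFiniteColimits (tensorRight Z) :=
    preservesFiniteColimits_of_natIso (BraidedCategory.tensorLeftIsoTensorRight Z)
  have := exactPairingKernel f
  have := exactPairingCokernel f
  have : HasRightDual (kernel f) := ⟨cokernel (fᘁ)⟩
  have : HasRightDual (cokernel f) := ⟨kernel (fᘁ)⟩
  exact ⟨⟨⟨inferInstance⟩, ⟨BraidedCategory.hasLeftDualOfHasRightDual⟩⟩,
    ⟨⟨inferInstance⟩, ⟨BraidedCategory.hasLeftDualOfHasRightDual⟩⟩⟩
end

section
/- Let A be a rigid abelian category with exact symmetric monoidal structure and S a Serre tensor ideal. Then the Serre quotient A/S, with its induced monoidal structure, is again rigid: every object of A/S is dualizable. -/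
open CategoryTheory CategoryTheory.Limits CategoryTheory.MonoidalCategory
open CategoryTheory.Functor.LaxMonoidal CategoryTheory.Functor.OplaxMonoidal

noncomputable def exactPairingMap {C D : Type*} [Category C] [Category D]
    [MonoidalCategory C] [MonoidalCategory D] (F : C ⥤ D) [F.Monoidal]
    (X Y : C) [ExactPairing X Y] : ExactPairing (F.obj X) (F.obj Y) where
  evaluation' := μ F Y X ≫ F.map (ε_ X Y) ≫ η F
  coevaluation' := ε F ≫ F.map (η_ X Y) ≫ δ F X Y
  coevaluation_evaluation' := by
    have h1 : F.obj Y ◁ δ F X Y ≫ (α_ _ _ _).inv ≫ μ F Y X ▷ F.obj Y =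
        μ F Y (X ⊗ Y) ≫ F.map (α_ Y X Y).inv ≫ δ F (Y ⊗ X) Y := by
      rw [← cancel_epi (F.obj Y ◁ μ F X Y), ← cancel_mono (μ F (Y ⊗ X) Y)]
      simp [Functor.OplaxMonoidal.associativity]
    simp only [MonoidalCategory.whiskerLeft_comp, MonoidalCategory.comp_whiskerRight, Category.assoc]
    slice_lhs 3 5 => rw [h1]
    slice_lhs 2 3 => rw [μ_natural_right]
    slice_lhs 5 6 => rw [δ_natural_left]
    simp only [Category.assoc, ← F.map_comp_assoc]
    rw [ExactPairing.coevaluation_evaluation]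
    simp [Functor.LaxMonoidal.right_unitality, Functor.OplaxMonoidal.left_unitality]
  evaluation_coevaluation' := by
    have h1 : δ F X Y ▷ F.obj X ≫ (α_ _ _ _).hom ≫ F.obj X ◁ μ F Y X =
        μ F (X ⊗ Y) X ≫ F.map (α_ X Y X).hom ≫ δ F X (Y ⊗ X) := by
      rw [← cancel_epi (μ F X Y ▷ F.obj X), ← cancel_mono (μ F X (Y ⊗ X))]
      simp [Functor.LaxMonoidal.associativity]
    simp only [MonoidalCategory.whiskerLeft_comp, MonoidalCategory.comp_whiskerRight, Category.assoc]
    slice_lhs 3 5 => rw [h1]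
    slice_lhs 2 3 => rw [μ_natural_left]
    slice_lhs 5 6 => rw [δ_natural_right]
    simp only [Category.assoc, ← F.map_comp_assoc]
    rw [ExactPairing.evaluation_coevaluation]
    simp [Functor.LaxMonoidal.left_unitality, Functor.OplaxMonoidal.right_unitality]


/-- Let `C` be a rigid abelian ℚ-linear category with exact symmetric
monoidal structure and let `Q : C ⥤ D` be the (essentially surjective, strong symmetric
monoidal, exact) projection onto a Serre quotient by a Serre tensor ideal, where `D`
carries the induced exact symmetric monoidal structure.  Then `D` is rigid. -/
theorem stmt9 (C D : Type*) [Category C] [Category D] [Abelian C] [Abelian D]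
    [Linear ℚ C] [MonoidalCategory C] [SymmetricCategory C] [RigidCategory C]
    [∀ X : C, PreservesFiniteLimits (tensorLeft X)]
    [∀ X : C, PreservesFiniteColimits (tensorLeft X)]
    [MonoidalCategory D] [SymmetricCategory D]
    [∀ X : D, PreservesFiniteLimits (tensorLeft X)]
    [∀ X : D, PreservesFiniteColimits (tensorLeft X)]
    (Q : C ⥤ D) [Q.Braided] [Q.EssSurj]
    [PreservesFiniteLimits Q] [PreservesFiniteColimits Q] :
    Nonempty (RigidCategory D) := by
  haveI : ∀ d : D, HasLeftDual d := fun d => by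
    letI := exactPairingMap Q (ᘁ(Q.objPreimage d)) (Q.objPreimage d)
    letI := exactPairingCongrRight (X := Q.obj (ᘁ(Q.objPreimage d)))
      (Q.objObjPreimageIso d).symm
    exact ⟨Q.obj (ᘁ(Q.objPreimage d))⟩
  haveI : ∀ d : D, HasRightDual d := fun d => by
    letI := exactPairingMap Q (Q.objPreimage d) ((Q.objPreimage d)ᘁ)
    letI := exactPairingCongrLeft (Y := Q.obj ((Q.objPreimage d)ᘁ))
      (Q.objObjPreimageIso d).symm
    exact ⟨Q.obj ((Q.objPreimage d)ᘁ)⟩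
  exact ⟨{}⟩
end
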